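/- arXiv:math/9901103 — 7 statements merged into one kernel-verified Lean document; each statement's English description precedes it below -/
import Mathlib

section
/- Let F be a cosheaf of sets over a topological space B with structure maps R^W_V : F(W) → F(V) for opens W ⊆ V. Then for all open sets U, W, V ⊆ B with U ∪ W = V, one has Im(R^U_V) ∩ Im(R^W_V) = Im(R^{U∩W}_V) as subsets of F(V). -/
open TopologicalSpace

/-- A cosheaf of sets over a topological space `B`: a set `obj V` for each open
`V ⊆ B` with inclusion maps `map : obj W → obj V` for opens `W ≤ V`, functorial
(`R^V_V = id` and `R^U_V ∘ R^W_U = R^W_V`), and satisfying the cosheaf gluing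
condition: for every open `V`, family `𝒲` of opens with `⋃𝒲 = V`, set `M` and
compatible family of maps `φ_W : obj W → M` (`W ∈ 𝒲`), there is a unique
`ψ : obj V → M` with `φ_W = ψ ∘ R^W_V` for all `W ∈ 𝒲`. -/
structure SetCosheaf (B : Type) [TopologicalSpace B] where
  obj : Opens B → Type
  map : ∀ {W V : Opens B}, W ≤ V → obj W → obj V
  map_id : ∀ (V : Opens B) (x : obj V), map (le_refl V) x = x
  map_comp : ∀ {W U V : Opens B} (h1 : W ≤ U) (h2 : U ≤ V) (x : obj W),
      map h2 (map h1 x) = map (h1.trans h2) x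
  glue : ∀ (V : Opens B) (𝒲 : Set (Opens B)) (hV : sSup 𝒲 = V)
      (M : Type) (φ : ∀ W ∈ 𝒲, obj W → M),
      (∀ U (hU : U ∈ 𝒲) (W) (hW : W ∈ 𝒲) (x : obj (U ⊓ W)),
        φ U hU (map inf_le_left x) = φ W hW (map inf_le_right x)) →
      ∃! ψ : obj V → M, ∀ W (hW : W ∈ 𝒲) (x : obj W),
        φ W hW x = ψ (map (le_of_le_of_eq (le_sSup hW) hV) x)

/-- A faded cosheaf of sets: a cosheaf of sets all of whose inclusion maps are
injective. -/
structure FadedSetCosheaf (B : Type) [TopologicalSpace B] extends SetCosheaf B where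
  inj : ∀ {W V : Opens B} (h : W ≤ V), Function.Injective (map h)

namespace CosheafImageInterAux

variable {B : Type} [TopologicalSpace B] (F : SetCosheaf B) (U W : Opens B)

/-- The sigma type of sections over members of `{U, W}`. -/
def Sig : Type := Σ X : ({U, W} : Set (Opens B)), F.obj X.1

/-- The relation whose quotient is the pushout. -/
def rel : Sig F U W → Sig F U W → Prop
  | ⟨⟨X, _⟩, x⟩, ⟨⟨Y, _⟩, y⟩ =>
    ∃ c : F.obj (X ⊓ Y), x = F.map inf_le_left c ∧ y = F.map inf_le_right c

variable {V : Opens B}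

/-- Every member of `{U, W}` is `≤ V`. -/
theorem leV (hU : U ≤ V) (hW : W ≤ V) : ∀ X ∈ ({U, W} : Set (Opens B)), X ≤ V := by
  rintro X (rfl | rfl) <;> assumption

/-- The value of a section in `F.obj V`. -/
def val (hU : U ≤ V) (hW : W ≤ V) (z : Sig F U W) : F.obj V :=
  F.map (leV U W hU hW z.1.1 z.1.2) z.2

theorem key (hU : U ≤ V) (hW : W ≤ V) {z w : Sig F U W}
    (h : Relation.EqvGen (rel F U W) z w) :
    z = w ∨
      (val F U W hU hW z ∈
          Set.range (F.map (inf_le_left.trans hU : U ⊓ W ≤ V)) ∧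
        val F U W hU hW w ∈
          Set.range (F.map (inf_le_left.trans hU : U ⊓ W ≤ V))) := by
  induction h with
  | rel z w h =>
    obtain ⟨⟨X, hX⟩, x⟩ := z
    obtain ⟨⟨Y, hY⟩, y⟩ := w
    obtain ⟨c, rfl, rfl⟩ := h
    by_cases hXY : X = Y
    · subst hXY
      exact Or.inl rfl
    · have hle : X ⊓ Y ≤ U ⊓ W := by
        rcases hX with rfl | rfl <;> rcases hY with rfl | rfl <;>
          first
            | exact absurd rfl hXY
            | exact le_refl _
            | exact le_of_eq (inf_comm _ _)
      refine Or.inr ⟨⟨F.map hle c, ?_⟩, ⟨F.map hle c, ?_⟩⟩ <;>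
      · unfold val
        dsimp
        rw [F.map_comp, F.map_comp]
  | refl z => exact Or.inl rfl
  | symm _ _ _ ih =>
    rcases ih with rfl | ⟨h1, h2⟩
    · exact Or.inl rfl
    · exact Or.inr ⟨h2, h1⟩
  | trans _ _ _ _ _ ih1 ih2 =>
    rcases ih1 with rfl | ⟨h1, h2⟩
    · exact ih2
    · rcases ih2 with rfl | ⟨h3, h4⟩
      · exact Or.inr ⟨h1, h2⟩
      · exact Or.inr ⟨h1, h4⟩

end CosheafImageInterAux

/-- For a cosheaf of sets `F` over `B` and opens `U, W ≤ V` with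
`U ∪ W = V`, one has `Im(R^U_V) ∩ Im(R^W_V) = Im(R^{U∩W}_V)` in `F(V)`. -/
theorem cosheaf_image_inter {B : Type} [TopologicalSpace B] (F : SetCosheaf B)
    (V U W : TopologicalSpace.Opens B) (hU : U ≤ V) (hW : W ≤ V)
    (hcov : U ⊔ W = V) :
    Set.range (F.map hU) ∩ Set.range (F.map hW) =
      Set.range (F.map (inf_le_left.trans hU : U ⊓ W ≤ V)) := by
  open CosheafImageInterAux in
  apply Set.Subset.antisymm
  · rintro x ⟨⟨a, ha⟩, ⟨b, hb⟩⟩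
    have hV : sSup ({U, W} : Set (Opens B)) = V := by rw [sSup_pair]; exact hcov
    have hmU : U ∈ ({U, W} : Set (Opens B)) := Set.mem_insert _ _
    have hmW : W ∈ ({U, W} : Set (Opens B)) := Set.mem_insert_of_mem _ rfl
    obtain ⟨ψ, hψ, -⟩ := F.glue V {U, W} hV (Quot (rel F U W))
      (fun X hX x => Quot.mk _ ⟨⟨X, hX⟩, x⟩)
      (fun X hX Y hY c => Quot.sound (⟨c, rfl, rfl⟩ : rel F U W ⟨⟨X, hX⟩, _⟩ ⟨⟨Y, hY⟩, _⟩))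
    have h1 : Quot.mk (rel F U W) ⟨⟨U, hmU⟩, a⟩ = ψ x := by
      have := hψ U hmU a
      have e : F.map (le_of_le_of_eq (le_sSup hmU) hV) a = F.map hU a := rfl
      rw [e, ha] at this
      exact this
    have h2 : Quot.mk (rel F U W) ⟨⟨W, hmW⟩, b⟩ = ψ x := by
      have := hψ W hmW b
      have e : F.map (le_of_le_of_eq (le_sSup hmW) hV) b = F.map hW b := rfl
      rw [e, hb] at this
      exact this
    have heq := Quot.eqvGen_exact (h1.trans h2.symm)
    rcases key F U W hU hW heq with hzw | ⟨hg, -⟩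
    · have hUW : U = W := congrArg (fun z => z.1.1) hzw
      subst hUW
      refine ⟨F.map (le_of_eq (inf_idem U).symm) a, ?_⟩
      rw [F.map_comp]
      exact ha
    · have e : val F U W hU hW ⟨⟨U, hmU⟩, a⟩ = F.map hU a := rfl
      rw [e, ha] at hg
      exact hg
  · rintro x ⟨c, rfl⟩
    exact ⟨⟨F.map inf_le_left c, by rw [F.map_comp]⟩,
      ⟨F.map inf_le_right c, by rw [F.map_comp]⟩⟩
end

section
/- Let F be a faded cosheaf of sets over a topological space B with structure maps R^W_V : F(W) → F(V). Then for every open V ⊆ B and every family 𝒲 of open subsets of V (not necessarily covering V), one has ⋃_{W ∈ 𝒲} Im(R^W_V) = Im(R^{⋃𝒲}_V) as subsets of F(V). -/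
open TopologicalSpace

/-- For a faded cosheaf of sets `F` over `B`, an open `V` and any
family `𝒲` of open subsets of `V` (not necessarily covering `V`), one has
`⋃_{W ∈ 𝒲} Im(R^W_V) = Im(R^{⋃𝒲}_V)` in `F(V)`. -/
theorem faded_cosheaf_image_iUnion {B : Type} [TopologicalSpace B]
    (F : FadedSetCosheaf B) (V : TopologicalSpace.Opens B)
    (𝒲 : Set (TopologicalSpace.Opens B)) (h𝒲 : ∀ W ∈ 𝒲, W ≤ V) :
    (⋃ W ∈ 𝒲, Set.range (F.map (h𝒲 W ‹W ∈ 𝒲›))) =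
      Set.range (F.map (sSup_le h𝒲 : sSup 𝒲 ≤ V)) := by
  set S : Set (F.obj V) := ⋃ W ∈ 𝒲, Set.range (F.map (h𝒲 W ‹W ∈ 𝒲›)) with hS
  apply le_antisymm
  · rintro z hz
    rw [Set.mem_iUnion₂] at hz
    obtain ⟨W, hW, y, rfl⟩ := hz
    exact ⟨F.map (le_sSup hW) y, F.map_comp _ _ y⟩
  · rintro z ⟨y, rfl⟩
    -- glue into the subtype S
    have hcompat : ∀ U (hU : U ∈ 𝒲) (W) (hW : W ∈ 𝒲) (x : F.obj (U ⊓ W)),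
        (⟨F.map (h𝒲 U hU) (F.map inf_le_left x),
          Set.mem_iUnion₂.2 ⟨U, hU, _, rfl⟩⟩ : S) =
        (⟨F.map (h𝒲 W hW) (F.map inf_le_right x),
          Set.mem_iUnion₂.2 ⟨W, hW, _, rfl⟩⟩ : S) := by
      intro U hU W hW x
      apply Subtype.ext
      show F.map (h𝒲 U hU) (F.map inf_le_left x) = F.map (h𝒲 W hW) (F.map inf_le_right x)
      rw [F.map_comp, F.map_comp]
    obtain ⟨ψ, hψ, -⟩ := F.glue (sSup 𝒲) 𝒲 rfl S
      (fun W hW x => ⟨F.map (h𝒲 W hW) x, Set.mem_iUnion₂.2 ⟨W, hW, x, rfl⟩⟩) hcompat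
    -- uniqueness: Subtype.val ∘ ψ = F.map (sSup_le h𝒲)
    have hcompat2 : ∀ U (hU : U ∈ 𝒲) (W) (hW : W ∈ 𝒲) (x : F.obj (U ⊓ W)),
        F.map (h𝒲 U hU) (F.map inf_le_left x) =
        F.map (h𝒲 W hW) (F.map inf_le_right x) := by
      intro U hU W hW x
      rw [F.map_comp, F.map_comp]
    obtain ⟨χ, -, hχuniq⟩ := F.glue (sSup 𝒲) 𝒲 rfl (F.obj V)
      (fun W hW => F.map (h𝒲 W hW)) hcompat2
    have h1 : (fun y => (ψ y).val) = χ := by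
      apply hχuniq
      intro W hW x
      rw [← hψ W hW x]
    have h2 : F.map (sSup_le h𝒲) = χ := by
      apply hχuniq
      intro W hW x
      rw [F.map_comp]
    have hval : F.map (sSup_le h𝒲) y = (ψ y).val := by rw [h2, ← h1]
    rw [hval]
    exact (ψ y).2
end

section
/- Let F be a faded cosheaf of sets over a topological space B with structure maps R^W_V : F(W) → F(V). Then for every open V ⊆ B and all open subsets U, W ⊆ V, one has Im(R^U_V) ∩ Im(R^W_V) = Im(R^{U∩W}_V) as subsets of F(V). -/
open TopologicalSpace

/-- Ranges of structure maps only depend on the (propositionally equal) source. -/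
theorem FadedSetCosheaf.range_map_congr {B : Type} [TopologicalSpace B]
    (F : FadedSetCosheaf B) {X X' V : Opens B} (e : X = X')
    (h : X ≤ V) (h' : X' ≤ V) :
    Set.range (F.map h) = Set.range (F.map h') := by
  subst e; rfl

/-- Pushout analysis: if `inl a` and `inr b` become equal in the quotient of a sum
by the relation identifying `inl (i c)` with `inr (j c)`, then `gA a` lies in the
range of `k`, for any cocone `gA, gB` factoring through `k` on the overlap. -/
theorem pushout_aux {A B C T : Type} (i : C → A) (j : C → B)
    (gA : A → T) (gB : B → T) (k : C → T)
    (hi : ∀ c, gA (i c) = k c) (hj : ∀ c, gB (j c) = k c) {a : A} {b : B}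
    (h : Quot.mk (fun s t => ∃ c : C, s = Sum.inl (i c) ∧ t = Sum.inr (j c)) (Sum.inl a)
       = Quot.mk (fun s t => ∃ c : C, s = Sum.inl (i c) ∧ t = Sum.inr (j c)) (Sum.inr b)) :
    gA a ∈ Set.range k := by
  set r : A ⊕ B → A ⊕ B → Prop :=
    fun s t => ∃ c : C, s = Sum.inl (i c) ∧ t = Sum.inr (j c) with hr
  set g : A ⊕ B → T := Sum.elim gA gB with hg
  have main : ∀ s t : A ⊕ B, Relation.EqvGen r s t →
      s = t ∨ (g s ∈ Set.range k ∧ g t ∈ Set.range k) := by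
    intro s t hst
    induction hst with
    | rel s t hrel =>
        obtain ⟨c, rfl, rfl⟩ := hrel
        exact Or.inr ⟨⟨c, (hi c).symm⟩, ⟨c, (hj c).symm⟩⟩
    | refl s => exact Or.inl rfl
    | symm s t _ ih =>
        rcases ih with h1 | ⟨h1, h2⟩
        · exact Or.inl h1.symm
        · exact Or.inr ⟨h2, h1⟩
    | trans s u t _ _ ih1 ih2 =>
        rcases ih1 with h1 | ⟨h1, h2⟩
        · rcases ih2 with h3 | ⟨h3, h4⟩
          · exact Or.inl (h1.trans h3)
          · exact Or.inr ⟨h1 ▸ h3, h4⟩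
        · rcases ih2 with h3 | ⟨h3, h4⟩
          · exact Or.inr ⟨h1, h3 ▸ h2⟩
          · exact Or.inr ⟨h1, h4⟩
  rcases main (Sum.inl a) (Sum.inr b) (Quot.eqvGen_exact h) with h1 | ⟨h1, -⟩
  · exact absurd h1 (by simp)
  · exact h1

/-- For a faded cosheaf of sets `F` over `B`, an open `V` and any
open subsets `U, W ≤ V`, one has `Im(R^U_V) ∩ Im(R^W_V) = Im(R^{U∩W}_V)`
in `F(V)`. -/
theorem faded_cosheaf_image_inter {B : Type} [TopologicalSpace B]
    (F : FadedSetCosheaf B) (V U W : TopologicalSpace.Opens B)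
    (hU : U ≤ V) (hW : W ≤ V) :
    Set.range (F.map hU) ∩ Set.range (F.map hW) =
      Set.range (F.map (inf_le_left.trans hU : U ⊓ W ≤ V)) := by
  apply Set.Subset.antisymm
  · rintro v ⟨⟨a, ha⟩, ⟨b, hb⟩⟩
    by_cases hUW : W = U
    · subst hUW
      rw [F.range_map_congr (inf_idem _) (inf_le_left.trans hU) hU]
      exact ⟨a, ha⟩
    · -- the nondegenerate case: use the gluing axiom on the cover {U, W} of U ⊔ W
      classical
      set r : F.obj U ⊕ F.obj W → F.obj U ⊕ F.obj W → Prop :=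
        fun s t => ∃ x : F.obj (U ⊓ W),
          s = Sum.inl (F.map inf_le_left x) ∧ t = Sum.inr (F.map inf_le_right x) with hr
      have hSV : U ⊔ W ≤ V := sup_le hU hW
      obtain ⟨ψ, hψ, -⟩ := F.glue (U ⊔ W) {U, W} (sSup_pair) (Quot r)
        (fun X hX x =>
          if h : X = U then Quot.mk r (Sum.inl (cast (congrArg F.obj h) x))
          else Quot.mk r (Sum.inr (cast (congrArg F.obj
            (Set.mem_singleton_iff.mp ((Set.mem_insert_iff.mp hX).resolve_left h))) x)))
        (by
          intro X hX Y hY x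
          rcases Set.mem_insert_iff.mp hX with rfl | hX'
          · rcases Set.mem_insert_iff.mp hY with rfl | hY'
            · simp only [dif_pos rfl, cast_eq]
            · have hYW := Set.mem_singleton_iff.mp hY'; subst hYW
              simp only [dif_pos rfl, dif_neg hUW, cast_eq]
              exact Quot.sound ⟨x, rfl, rfl⟩
          · have hXW := Set.mem_singleton_iff.mp hX'; subst hXW
            rcases Set.mem_insert_iff.mp hY with rfl | hY'
            · simp only [dif_pos rfl, dif_neg hUW, cast_eq]
              refine (Quot.sound ⟨F.map (le_of_eq (inf_comm _ _)) x, ?_, ?_⟩).symm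
              · exact congrArg Sum.inl (F.map_comp _ _ x).symm
              · exact congrArg Sum.inr (F.map_comp _ _ x).symm
            · have hYW := Set.mem_singleton_iff.mp hY'; subst hYW
              simp only [dif_neg hUW, cast_eq])
      have hA := hψ U (Set.mem_insert _ _) a
      have hB := hψ W (Set.mem_insert_of_mem _ rfl) b
      simp only [dif_pos rfl, eq_self_iff_true, dite_true, dif_neg hUW, cast_eq] at hA hB
      have hq : Quot.mk r (Sum.inl a) = Quot.mk r (Sum.inr b) := by
        rw [hA, hB]
        congr 1
        apply F.inj hSV
        rw [F.map_comp, F.map_comp]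
        exact ha.trans hb.symm
      rw [hr] at hq
      have := pushout_aux (F.map inf_le_left) (F.map inf_le_right)
        (F.map hU) (F.map hW) (F.map (inf_le_left.trans hU))
        (fun c => F.map_comp _ _ _) (fun c => F.map_comp _ _ _) hq
      rwa [ha] at this
  · rintro v ⟨x, hx⟩
    refine ⟨⟨F.map inf_le_left x, ?_⟩, ⟨F.map inf_le_right x, ?_⟩⟩
    · rw [F.map_comp]; exact hx
    · rw [F.map_comp]; exact hx
end

section
/- Let F be a faded cosheaf of sets over a topological space B with structure maps R^W_V : F(W) → F(V). Then for every open V ⊆ B and every element x ∈ F(V), the family 𝒜_V(x) = { W : W open, W ⊆ V, x ∈ Im(R^W_V) } is a completely prime filter on the lattice of open subsets of V. -/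
open TopologicalSpace

/-- A completely prime filter on the lattice of open subsets of an open set
`V ⊆ B`: a collection `𝒜` of open subsets of `V` containing `V`, upward closed
(within the opens of `V`), closed under binary intersections, and inaccessible
by arbitrary unions of opens of `V`. -/
def IsCPFilterOn {B : Type} [TopologicalSpace B] (V : TopologicalSpace.Opens B)
    (𝒜 : Set (TopologicalSpace.Opens B)) : Prop :=
  (∀ U ∈ 𝒜, U ≤ V) ∧
  V ∈ 𝒜 ∧
  (∀ W ∈ 𝒜, ∀ U : TopologicalSpace.Opens B, W ≤ U → U ≤ V → U ∈ 𝒜) ∧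
  (∀ U ∈ 𝒜, ∀ W ∈ 𝒜, U ⊓ W ∈ 𝒜) ∧
  (∀ 𝒲 : Set (TopologicalSpace.Opens B), (∀ W ∈ 𝒲, W ≤ V) →
    sSup 𝒲 ∈ 𝒜 → ∃ W ∈ 𝒲, W ∈ 𝒜)

/-!
Upward closure and `V ∈ 𝒜_V(x)` are functoriality. The other two axioms come from gluing maps
into `Prop`: a section of `F(⋃ 𝒲)` coming from no member of `𝒲` would make the predicates
`(· = y)` and `False` two distinct gluings of the same family, and gluing the predicates
"comes from `U ∩ T`" over `{U, W}` shows that sections of `F(U)` and `F(W)` which agree in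
`F(U ∪ W)` come from `F(U ∩ W)`. Injectivity of the restriction maps lets "agree in `F(V)`"
replace "agree in `F(U ∪ W)`".
-/

namespace SetCosheaf

variable {B : Type} [TopologicalSpace B] (F : SetCosheaf B)

theorem range_map_trans_subset {W U V : Opens B} (h₁ : W ≤ U) (h₂ : U ≤ V) :
    Set.range (F.map (h₁.trans h₂)) ⊆ Set.range (F.map h₂) := by
  rintro _ ⟨c, rfl⟩
  exact ⟨F.map h₁ c, F.map_comp h₁ h₂ c⟩

theorem map_mem_range_map_trans {W U V : Opens B} (h₁ : W ≤ U) (h₂ : U ≤ V) {y : F.obj U}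
    (hy : y ∈ Set.range (F.map h₁)) : F.map h₂ y ∈ Set.range (F.map (h₁.trans h₂)) := by
  obtain ⟨z, rfl⟩ := hy
  exact ⟨z, (F.map_comp h₁ h₂ z).symm⟩

theorem exists_mem_range_map_le_sSup {𝒲 : Set (Opens B)} (y : F.obj (sSup 𝒲)) :
    ∃ W, ∃ hW : W ∈ 𝒲, y ∈ Set.range (F.map (le_sSup hW)) := by
  by_contra! hy
  obtain ⟨ψ, -, huniq⟩ := F.glue (sSup 𝒲) 𝒲 rfl Prop
    (fun W hW z => F.map (le_sSup hW) z = y)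
    (fun U _ W _ c => by simp only [F.map_comp])
  have h_eq : ψ = (· = y) := (huniq _ fun _ _ _ => rfl).symm
  have h_false : ψ = fun _ => False :=
    (huniq _ fun W hW z => eq_false fun hz => hy W hW ⟨z, hz⟩).symm
  exact cast (congrFun (h_eq.symm.trans h_false) y) rfl

theorem mem_range_map_inf_right_of_map_eq {U W : Opens B} (a : F.obj U) (b : F.obj W)
    (hab : F.map le_sup_left a = F.map (le_sup_right : W ≤ U ⊔ W) b) :
    b ∈ Set.range (F.map (inf_le_right : U ⊓ W ≤ W)) := by
  have hmem {S T : Opens B} (h : S ≤ U ⊓ T) (c : F.obj S) :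
      F.map (h.trans inf_le_right) c ∈ Set.range (F.map (inf_le_right : U ⊓ T ≤ T)) :=
    F.range_map_trans_subset h inf_le_right (Set.mem_range_self c)
  obtain ⟨ψ, hψ, -⟩ := F.glue (U ⊔ W) {U, W} sSup_pair Prop
    (fun T _ z => z ∈ Set.range (F.map (inf_le_right : U ⊓ T ≤ T)))
    (by
      rintro T₁ (rfl | rfl) T₂ (rfl | rfl) c
      · rfl
      · exact propext (iff_of_true (hmem (le_inf inf_le_left inf_le_left) c) (hmem le_rfl c))
      · exact propext (iff_of_true (hmem (le_inf inf_le_right inf_le_left) c)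
          (hmem (le_inf inf_le_right inf_le_right) c))
      · rfl)
  have ha : a ∈ Set.range (F.map (inf_le_right : U ⊓ U ≤ U)) :=
    F.map_id U a ▸ hmem (le_inf le_rfl le_rfl) a
  have hψa := hψ U (Set.mem_insert U {W}) a
  have hψb := hψ W (Set.mem_insert_of_mem U rfl) b
  rw [hψb, ← hab, ← hψa]
  exact ha

end SetCosheaf

namespace FadedSetCosheaf

variable {B : Type} [TopologicalSpace B] (F : FadedSetCosheaf B)

theorem range_map_inf {U W V : Opens B} (hU : U ≤ V) (hW : W ≤ V) :
    Set.range (F.map (inf_le_left.trans hU : U ⊓ W ≤ V)) =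
      Set.range (F.map hU) ∩ Set.range (F.map hW) := by
  refine subset_antisymm (Set.subset_inter (F.range_map_trans_subset inf_le_left hU) ?_) ?_
  · exact F.range_map_trans_subset inf_le_right hW
  rintro _ ⟨⟨a, rfl⟩, b, hb⟩
  have hab : F.map le_sup_left a = F.map (le_sup_right : W ≤ U ⊔ W) b :=
    F.inj (sup_le hU hW) (by rw [F.map_comp, F.map_comp, hb])
  obtain ⟨d, rfl⟩ := F.mem_range_map_inf_right_of_map_eq a b hab
  exact ⟨d, by rw [← hb, F.map_comp]⟩

end FadedSetCosheaf

/-- For a faded cosheaf of sets `F` over `B`, an open `V` and an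
element `x ∈ F(V)`, the family `𝒜_V(x) = {W : W open ⊆ V, x ∈ Im(R^W_V)}` is a
completely prime filter on the lattice of open subsets of `V`. -/
theorem faded_cosheaf_filter_cpf {B : Type} [TopologicalSpace B]
    (F : FadedSetCosheaf B) (V : TopologicalSpace.Opens B) (x : F.obj V) :
    IsCPFilterOn V {W : TopologicalSpace.Opens B |
      ∃ h : W ≤ V, x ∈ Set.range (F.map h)} := by
  refine ⟨fun U hU => hU.1, ⟨le_rfl, x, F.map_id V x⟩, ?_, ?_, ?_⟩
  · rintro W ⟨hWV, hx⟩ U hWU hUV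
    exact ⟨hUV, F.range_map_trans_subset hWU hUV hx⟩
  · rintro U ⟨hUV, hxU⟩ W ⟨hWV, hxW⟩
    refine ⟨inf_le_left.trans hUV, ?_⟩
    rw [F.range_map_inf hUV hWV]
    exact ⟨hxU, hxW⟩
  · rintro 𝒲 - ⟨hSV, y, rfl⟩
    obtain ⟨W, hW, hy⟩ := F.exists_mem_range_map_le_sSup y
    exact ⟨W, hW, _, F.map_mem_range_map_trans (le_sSup hW) hSV hy⟩
end

section
/- Let B be a sober topological space (T0 and quasi-sober) and let F be a faded cosheaf of sets over B with structure maps R^W_V : F(W) → F(V). Then for every open V ⊆ B there exists a unique map s_V : F(V) → V such that for every open W ⊆ V and every x ∈ F(V): s_V(x) ∈ W if and only if x ∈ Im(R^W_V). -/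
/-!
An element `x ∈ F(V)` determines the predicate `U ↦ x ∈ Im R^{U ∩ V}_V` on the opens of
`B`. The gluing condition makes it preserve arbitrary joins (a cover of `U ∩ V` must see
`x`), and gluing into `Prop` over the cover `{W₁, W₂}` of `W₁ ∪ W₂`, together with
injectivity of `R^{W₁ ∪ W₂}_V`, makes it preserve binary meets. So it is a frame homomorphism
`𝒪(B) → Prop`, i.e. a point of the locale of opens of `B`, and on a sober space every such
point is realised by exactly one point of `B`: the generic point of the complement of the
largest open on which the homomorphism vanishes.
-/

open TopologicalSpace

section Sober

variable {X : Type*} [TopologicalSpace X]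

theorem QuasiSober.exists_forall_mem_iff_of_frameHom [QuasiSober X]
    (p : FrameHom (Opens X) Prop) : ∃ x : X, ∀ U : Opens X, x ∈ U ↔ p U := by
  set U₀ : Opens X := sSup {U | ¬ p U}
  have hU₀ : ¬ p U₀ := by
    simp only [U₀, map_sSup, sSup_Prop_eq, Set.mem_image]
    rintro ⟨_, ⟨U, hU, rfl⟩, hpU⟩
    exact hU hpU
  have hp : ∀ U : Opens X, p U ↔ ((U₀ : Set X)ᶜ ∩ U).Nonempty := by
    intro U
    rw [Set.inter_comm, Set.inter_compl_nonempty_iff, SetLike.coe_subset_coe]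
    refine ⟨fun hpU hle => hU₀ (OrderHomClass.mono p hle hpU), fun hle => ?_⟩
    by_contra hpU
    exact hle (le_sSup hpU)
  have hirr : IsIrreducible (U₀ : Set X)ᶜ := by
    refine ⟨by simpa using (hp ⊤).mp (by rw [map_top]; trivial), fun u v hu hv hZu hZv => ?_⟩
    refine (hp (⟨u, hu⟩ ⊓ ⟨v, hv⟩)).mp ?_
    rw [map_inf]
    exact ⟨(hp ⟨u, hu⟩).mpr hZu, (hp ⟨v, hv⟩).mpr hZv⟩
  obtain ⟨x, hx⟩ := QuasiSober.sober hirr U₀.isOpen.isClosed_compl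
  exact ⟨x, fun U => (hx.mem_open_set_iff U.isOpen).trans (hp U).symm⟩

theorem existsUnique_forall_mem_iff_of_frameHom [T0Space X] [QuasiSober X]
    (p : FrameHom (Opens X) Prop) : ∃! x : X, ∀ U : Opens X, x ∈ U ↔ p U := by
  obtain ⟨x, hx⟩ := QuasiSober.exists_forall_mem_iff_of_frameHom p
  refine ⟨x, hx, fun y hy => (inseparable_iff_forall_isOpen.mpr fun s hs => ?_).eq⟩
  exact (hy ⟨s, hs⟩).trans (hx ⟨s, hs⟩).symm

end Sober

namespace SetCosheaf

variable {B : Type} [TopologicalSpace B] (F : SetCosheaf B)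

theorem map_mem_range_map {A C D : Opens B} (hAC : A ≤ C) (hAD : A ≤ D) (hCD : C ≤ D)
    (z : F.obj A) : F.map hAD z ∈ Set.range (F.map hCD) :=
  ⟨F.map hAC z, F.map_comp hAC hCD z⟩

theorem range_map_mono {W W' V : Opens B} (h : W ≤ W') (hW : W ≤ V) (hW' : W' ≤ V) :
    Set.range (F.map hW) ⊆ Set.range (F.map hW') := by
  rintro _ ⟨z, rfl⟩
  exact F.map_mem_range_map h hW hW' z

theorem mem_range_map_self (V : Opens B) (x : F.obj V) :
    x ∈ Set.range (F.map (le_refl V)) :=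
  ⟨x, F.map_id V x⟩

theorem exists_mem_range_of_sSup_eq {V : Opens B} {𝒲 : Set (Opens B)} (hV : sSup 𝒲 = V)
    (x : F.obj V) : ∃ W ∈ 𝒲, ∃ h : W ≤ V, x ∈ Set.range (F.map h) := by
  -- the constant family `True` glues uniquely, and "lies in the image of a member" glues it
  have hglue := F.glue V 𝒲 hV Prop (fun _ _ _ => True) fun _ _ _ _ _ => rfl
  have hcovered : (fun y => ∃ W ∈ 𝒲, ∃ h : W ≤ V, y ∈ Set.range (F.map h)) = fun _ => True :=
    hglue.unique (fun W hW y => (eq_true ⟨W, hW, _, y, rfl⟩).symm) fun _ _ _ => rfl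
  exact of_eq_true (congrFun hcovered x)

end SetCosheaf

namespace FadedSetCosheaf

variable {B : Type} [TopologicalSpace B] (F : FadedSetCosheaf B)

theorem mem_range_map_inf {V W₁ W₂ : Opens B} (h₁ : W₁ ≤ V) (h₂ : W₂ ≤ V) (h : W₁ ⊓ W₂ ≤ V)
    {x : F.obj V} (hx₁ : x ∈ Set.range (F.map h₁)) (hx₂ : x ∈ Set.range (F.map h₂)) :
    x ∈ Set.range (F.map h) := by
  obtain ⟨y₁, rfl⟩ := hx₁
  obtain ⟨y₂, hy₂⟩ := hx₂
  have hpair : ∀ U ∈ ({W₁, W₂} : Set (Opens B)), ∀ W ∈ ({W₁, W₂} : Set (Opens B)),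
      U ⊓ W ≤ W₁ ∨ U = W := by
    rintro U (rfl | rfl) W (rfl | rfl) <;> simp
  obtain ⟨ψ, hψ, -⟩ := F.glue (W₁ ⊔ W₂) {W₁, W₂} sSup_pair Prop
    (fun W _ z => z ∈ Set.range (F.map (inf_le_right : W₁ ⊓ W ≤ W))) <| by
      intro U hU W hW z
      rcases hpair U hU W hW with hle | rfl
      · exact propext (iff_of_true (F.map_mem_range_map (le_inf hle inf_le_left) _ _ z)
          (F.map_mem_range_map (le_inf hle inf_le_right) _ _ z))
      · rfl
  have hy : F.map (le_sup_left : W₁ ≤ W₁ ⊔ W₂) y₁ = F.map le_sup_right y₂ := by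
    apply F.inj (sup_le h₁ h₂)
    rw [F.map_comp, F.map_comp, hy₂]
  have hy₁ : y₁ ∈ Set.range (F.map (inf_le_right : W₁ ⊓ W₁ ≤ W₁)) :=
    F.range_map_mono (le_inf le_rfl le_rfl) le_rfl _ (F.mem_range_map_self W₁ y₁)
  obtain ⟨c, rfl⟩ : y₂ ∈ Set.range (F.map (inf_le_right : W₁ ⊓ W₂ ≤ W₂)) := by
    rw [hψ W₂ (by simp), ← hy, ← hψ W₁ (by simp)]
    exact hy₁
  exact ⟨c, by rw [← hy₂, F.map_comp]⟩

def supportPoint {V : Opens B} (x : F.obj V) : FrameHom (Opens B) Prop where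
  toFun U := x ∈ Set.range (F.map (inf_le_right : U ⊓ V ≤ V))
  map_inf' U U' := propext
    ⟨fun hx => ⟨F.range_map_mono (inf_le_inf_right V inf_le_left) _ _ hx,
      F.range_map_mono (inf_le_inf_right V inf_le_right) _ _ hx⟩,
    fun ⟨hU, hU'⟩ => F.range_map_mono
      (le_inf (inf_le_inf inf_le_left inf_le_left) (inf_le_left.trans inf_le_right)) _ _
      (F.mem_range_map_inf _ _ (inf_le_left.trans inf_le_right) hU hU')⟩
  map_top' := eq_true (F.range_map_mono (le_inf le_top le_rfl) _ _ (F.mem_range_map_self V x))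
  map_sSup' S := by
    refine propext ⟨?_, ?_⟩
    · rintro ⟨y, rfl⟩
      have hcover : sSup ((· ⊓ V) '' S) = sSup S ⊓ V := by rw [sSup_image, sSup_inf_eq]
      obtain ⟨_, ⟨U, hU, rfl⟩, hle, z, rfl⟩ := F.exists_mem_range_of_sSup_eq hcover y
      exact ⟨_, ⟨U, hU, rfl⟩, z, (F.map_comp _ _ z).symm⟩
    · rintro ⟨_, ⟨U, hU, rfl⟩, hx⟩
      exact F.range_map_mono (inf_le_inf_right V (le_sSup hU)) _ _ hx

theorem supportPoint_apply_of_le {V W : Opens B} (x : F.obj V) (h : W ≤ V) :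
    F.supportPoint x W ↔ x ∈ Set.range (F.map h) :=
  ⟨fun hx => F.range_map_mono inf_le_left _ _ hx,
    fun hx => F.range_map_mono (le_inf le_rfl h) _ _ hx⟩

theorem existsUnique_support [T0Space B] [QuasiSober B] {V : Opens B} (x : F.obj V) :
    ∃! b : V, ∀ (W : Opens B) (h : W ≤ V), (b : B) ∈ W ↔ x ∈ Set.range (F.map h) := by
  obtain ⟨b, hb, hunique⟩ := existsUnique_forall_mem_iff_of_frameHom (F.supportPoint x)
  have hbV : b ∈ V := (hb V).mpr ((F.supportPoint_apply_of_le x le_rfl).mpr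
    (F.mem_range_map_self V x))
  refine ⟨⟨b, hbV⟩, fun W h => (hb W).trans (F.supportPoint_apply_of_le x h),
    fun b' hb' => Subtype.ext (hunique b' fun U => ?_)⟩
  exact (and_iff_left b'.2).symm.trans (hb' (U ⊓ V) inf_le_right)

end FadedSetCosheaf

/-- For a faded cosheaf of sets `F` over a sober space `B` (T0 and
quasi-sober) and every open `V`, there is a unique map `s_V : F(V) → V` such
that for every open `W ≤ V` and every `x ∈ F(V)`:
`s_V(x) ∈ W ↔ x ∈ Im(R^W_V)`. -/
theorem faded_cosheaf_support_unique {B : Type} [TopologicalSpace B]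
    [T0Space B] [QuasiSober B] (F : FadedSetCosheaf B)
    (V : TopologicalSpace.Opens B) :
    ∃! s : F.obj V → V, ∀ (W : TopologicalSpace.Opens B) (h : W ≤ V)
      (x : F.obj V), (s x : B) ∈ W ↔ x ∈ Set.range (F.map h) := by
  obtain ⟨s, hs⟩ := forall_existsUnique_iff.mp (F.existsUnique_support (V := V))
  exact ⟨s, fun W h x => hs.mpr rfl W h,
    fun s' hs' => funext fun x => (hs.mp fun W h => hs' W h x).symm⟩
end

section
/- Let B be a sober topological space (T0 and quasi-sober), F a faded cosheaf of sets over B with structure maps R^W_V, and for each open V let s_V : F(V) → V be the support map characterized by: s_V(x) ∈ W if and only if x ∈ Im(R^W_V), for all open W ⊆ V. Then for all opens W ⊆ V ⊆ B and all x ∈ F(W), one has s_V(R^W_V(x)) = s_W(x) (as points of B); i.e., s_V ∘ R^W_V = j^W_V ∘ s_W where j^W_V : W → V is the inclusion. -/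
open TopologicalSpace

lemma cosheaf_pushout_aux {B : Type} [TopologicalSpace B] (F : FadedSetCosheaf B)
    (A C : Opens B) (x : F.obj A) (z : F.obj C)
    (h : F.map (le_sup_left : A ≤ A ⊔ C) x = F.map (le_sup_right : C ≤ A ⊔ C) z) :
    x ∈ Set.range (F.map (inf_le_left : A ⊓ C ≤ A)) := by
  by_cases hAC : A ≤ C
  · exact ⟨F.map (le_inf le_rfl hAC) x, by rw [F.map_comp, F.map_id]⟩
  have hCA : C ≠ A := fun e => hAC (e ▸ le_rfl)
  classical
  set 𝒲 : Set (Opens B) := {A, C} with h𝒲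
  have hA𝒲 : A ∈ 𝒲 := Or.inl rfl
  have hC𝒲 : C ∈ 𝒲 := Or.inr rfl
  have hle : ∀ W ∈ 𝒲, A ⊓ C ≤ W := by
    rintro W (rfl | rfl)
    · exact inf_le_left
    · exact inf_le_right
  set φ : ∀ W ∈ 𝒲, F.obj W → Prop :=
    fun W hW y => ∀ _ : W = A, y ∈ Set.range (F.map (hle W hW)) with hφ
  have compat : ∀ U (hU : U ∈ 𝒲) (W) (hW : W ∈ 𝒲) (t : F.obj (U ⊓ W)),
      φ U hU (F.map inf_le_left t) = φ W hW (F.map inf_le_right t) := by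
    rintro U (rfl | rfl) W (rfl | rfl) t
    · rfl
    · apply propext
      constructor
      · intro _ e; exact absurd e hCA
      · intro _ _
        exact ⟨t, rfl⟩
    · apply propext
      constructor
      · intro _ _
        refine ⟨F.map (le_inf inf_le_right inf_le_left) t, ?_⟩
        rw [F.map_comp]
      · intro _ e; exact absurd e hCA
    · rfl
  obtain ⟨ψ, hψ, -⟩ := F.glue (A ⊔ C) 𝒲 sSup_pair Prop φ compat
  have e1 := hψ A hA𝒲 x
  have e2 := hψ C hC𝒲 z
  have hmapx : F.map (le_of_le_of_eq (le_sSup hA𝒲) sSup_pair) x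
      = F.map (le_sup_left : A ≤ A ⊔ C) x := rfl
  have hmapz : F.map (le_of_le_of_eq (le_sSup hC𝒲) sSup_pair) z
      = F.map (le_sup_right : C ≤ A ⊔ C) z := rfl
  rw [hmapx, h, ← hmapz] at e1
  rw [← e2] at e1
  have hφC : φ C hC𝒲 z := fun e => absurd e hCA
  have hφA : φ A hA𝒲 x := e1 ▸ hφC
  exact hφA rfl

/-- For a faded cosheaf of sets `F` over a sober space `B`, the
support maps `s_V : F(V) → V` (characterized by `s_V(x) ∈ W ↔ x ∈ Im(R^W_V)`
for all opens `W ≤ V`) are compatible with the inclusion maps: for opens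
`W ≤ V` and `x ∈ F(W)`, `s_V(R^W_V(x)) = s_W(x)` as points of `B`. -/
theorem faded_cosheaf_support_natural {B : Type} [TopologicalSpace B]
    [T0Space B] [QuasiSober B] (F : FadedSetCosheaf B)
    (s : ∀ V : TopologicalSpace.Opens B, F.obj V → V)
    (hs : ∀ (V W : TopologicalSpace.Opens B) (h : W ≤ V) (x : F.obj V),
      (s V x : B) ∈ W ↔ x ∈ Set.range (F.map h)) :
    ∀ (V W : TopologicalSpace.Opens B) (h : W ≤ V) (x : F.obj W),
      (s V (F.map h x) : B) = (s W x : B) := by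
  intro V W h x
  have key : ∀ U : Opens B, (s V (F.map h x) : B) ∈ U ↔ (s W x : B) ∈ U := by
    intro U
    have h1 : (s V (F.map h x) : B) ∈ U ↔
        F.map h x ∈ Set.range (F.map (inf_le_right : U ⊓ V ≤ V)) := by
      rw [← hs V (U ⊓ V) inf_le_right]
      constructor
      · intro hu; exact ⟨hu, (s V (F.map h x)).2⟩
      · intro hu; exact hu.1
    have h2 : (s W x : B) ∈ U ↔ x ∈ Set.range (F.map (inf_le_right : U ⊓ W ≤ W)) := by
      rw [← hs W (U ⊓ W) inf_le_right]
      constructor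
      · intro hu; exact ⟨hu, (s W x).2⟩
      · intro hu; exact hu.1
    rw [h1, h2]
    constructor
    · rintro ⟨z, hz⟩
      have hV' : W ⊔ (U ⊓ V) ≤ V := sup_le h inf_le_right
      have hx' : F.map hV' (F.map (le_sup_left : W ≤ W ⊔ (U ⊓ V)) x)
          = F.map hV' (F.map (le_sup_right : U ⊓ V ≤ W ⊔ (U ⊓ V)) z) := by
        rw [F.map_comp, F.map_comp]
        exact hz.symm
      have heq := F.inj hV' hx'
      obtain ⟨t, ht⟩ := cosheaf_pushout_aux F W (U ⊓ V) x z heq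
      refine ⟨F.map (le_inf (inf_le_right.trans inf_le_left) inf_le_left) t, ?_⟩
      rw [F.map_comp]
      exact ht
    · rintro ⟨y, hy⟩
      refine ⟨F.map (inf_le_inf_left U h) y, ?_⟩
      rw [F.map_comp, ← hy, F.map_comp]
  have : Inseparable (s V (F.map h x) : B) (s W x : B) := by
    rw [inseparable_iff_forall_isOpen]
    intro S hS
    exact key ⟨S, hS⟩
  exact this.eq
end

section
/- Let B be a sober topological space (T0 and quasi-sober), let F and G be faded cosheaves of sets over B with structure maps R^W_V and T^W_V respectively, and let s^F : F(B) → B and s^G : G(B) → B be their support maps on the top components (characterized by s^F(x) ∈ W ⟺ x ∈ Im(R^W_B) and s^G(y) ∈ W ⟺ y ∈ Im(T^W_B)). Let Φ = (φ_V : F(V) → G(V)) be a morphism of cosheaves, i.e. φ_V ∘ R^W_V = T^W_V ∘ φ_W for all opens W ⊆ V. Then φ_B is a tubewise morphism from s^F to s^G: for every open V ⊆ B, φ_B maps { x ∈ F(B) : s^F(x) ∈ V } into { y ∈ G(B) : s^G(y) ∈ V }. -/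
open TopologicalSpace

/-- Let `F`, `G` be faded cosheaves of sets over a sober space
`B`, with support maps `sF : F(B) → B`, `sG : G(B) → B` on the top components,
and let `Φ = (φ_V)` be a morphism of cosheaves (`φ_V ∘ R^W_V = T^W_V ∘ φ_W`).
Then `φ_B` is a tubewise morphism from `sF` to `sG`: for every open `V`, `φ_B`
maps `{x : sF(x) ∈ V}` into `{y : sG(y) ∈ V}`. -/
theorem cosheaf_morphism_top_tubewise {B : Type} [TopologicalSpace B]
    [T0Space B] [QuasiSober B] (F G : FadedSetCosheaf B)
    (sF : F.obj ⊤ → B) (sG : G.obj ⊤ → B)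
    (hsF : ∀ (W : TopologicalSpace.Opens B) (x : F.obj ⊤),
      sF x ∈ W ↔ x ∈ Set.range (F.map (le_top : W ≤ ⊤)))
    (hsG : ∀ (W : TopologicalSpace.Opens B) (y : G.obj ⊤),
      sG y ∈ W ↔ y ∈ Set.range (G.map (le_top : W ≤ ⊤)))
    (φ : ∀ V : TopologicalSpace.Opens B, F.obj V → G.obj V)
    (hφ : ∀ (W V : TopologicalSpace.Opens B) (h : W ≤ V) (x : F.obj W),
      φ V (F.map h x) = G.map h (φ W x)) :
    ∀ V : TopologicalSpace.Opens B,
      (φ ⊤) '' {x : F.obj ⊤ | sF x ∈ V} ⊆ {y : G.obj ⊤ | sG y ∈ V} := by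
  intro V y hy
  obtain ⟨x, hx, rfl⟩ := hy
  obtain ⟨x', hx'⟩ := (hsF V x).mp hx
  rw [Set.mem_setOf_eq, hsG]
  exact ⟨φ V x', by rw [← hφ V ⊤ le_top x', hx']⟩
end
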